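/- Let (n_k) be lacunary with ratio α > 1, and let σ_n f = K_n * f where K_n is the Fejér kernel (equivalently, the Fourier multiplier with symbol K̂_n(x) = max(0, 1 − |x|/(n+1))). Then there exists C > 0 such that for every bounded sequence (c_k) with |c_k| ≤ 1 and every N, ‖∑_{k=1}^{N} c_k (σ_{n_{k+1}} f − σ_{n_k} f)‖₂ ≤ C ‖f‖₂ for all f ∈ L²(ℝ). -/

import Mathlib

open MeasureTheory FourierTransform

/-- Fejér multiplier symbol. -/
noncomputable def fejerSymbol (n : ℕ) (x : ℝ) : ℝ := max 0 (1 - |x| / (n + 1))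

/-!
Each Fejér mean is the Fourier multiplier with symbol `fejerSymbol m`, so after the Plancherel
transform the combination `∑ c_k (σ_{n_{k+1}} f - σ_{n_k} f)` becomes multiplication by
`∑ c_k (K̂_{n_{k+1}} - K̂_{n_k})`. Lacunarity makes `n_k` increasing, and `K̂_m(x)` increases with `m`
and lies in `[0, 1]`, so the modulus of this symbol is at most the telescoping sum `K̂_{n_{N+1}} - K̂_{n_1} ≤ 1`.
Plancherel then gives the bound with `C = 1`.
-/

lemma fejerSymbol_nonneg (m : ℕ) (x : ℝ) : 0 ≤ fejerSymbol m x := le_max_left _ _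

lemma fejerSymbol_le_one (m : ℕ) (x : ℝ) : fejerSymbol m x ≤ 1 := by
  have : 0 ≤ |x| / (m + 1) := by positivity
  exact max_le zero_le_one (by linarith)

lemma fejerSymbol_monotone (x : ℝ) : Monotone (fejerSymbol · x) := by
  intro m m' h
  have : |x| / (m' + 1) ≤ |x| / (m + 1) :=
    div_le_div_of_nonneg_left (abs_nonneg x) (by positivity) (by gcongr)
  exact max_le_max le_rfl (by linarith)

lemma monotone_of_le_div_succ {n : ℕ → ℕ} {α : ℝ} (hα : 1 < α)
    (hlac : ∀ k, α ≤ (n (k + 1) : ℝ) / (n k : ℝ)) : Monotone n := by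
  refine monotone_nat_of_le_succ fun k => ?_
  rcases (n k).eq_zero_or_pos with hk | hk
  · simp [hk]
  · have hk : (0 : ℝ) < n k := by exact_mod_cast hk
    have := (le_div_iff₀ hk).1 (hlac k)
    exact_mod_cast (show (n k : ℝ) ≤ n (k + 1) by nlinarith)

lemma norm_sum_mul_sub_le_of_monotone {𝕜 : Type*} [RCLike 𝕜] {a : ℕ → ℝ} (ha : Monotone a)
    {c : ℕ → 𝕜} (hc : ∀ k, ‖c k‖ ≤ 1) (N : ℕ) :
    ‖∑ k ∈ Finset.Icc 1 N, c k * ((a (k + 1) : 𝕜) - a k)‖ ≤ a (N + 1) - a 1 := by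
  calc ‖∑ k ∈ Finset.Icc 1 N, c k * ((a (k + 1) : 𝕜) - a k)‖
      ≤ ∑ k ∈ Finset.Icc 1 N, (a (k + 1) - a k) := by
        refine (norm_sum_le _ _).trans (Finset.sum_le_sum fun k _ => ?_)
        have hk : 0 ≤ a (k + 1) - a k := sub_nonneg.2 (ha k.le_succ)
        rw [norm_mul, ← RCLike.ofReal_sub, RCLike.norm_ofReal, abs_of_nonneg hk]
        exact mul_le_of_le_one_left hk (hc k)
    _ = a (N + 1) - a 1 := by
        rw [← Finset.Ico_add_one_right_eq_Icc, Finset.sum_Ico_sub a (Nat.le_add_left 1 N)]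

lemma MeasureTheory.Lp.coeFn_sum_smul_ae_eq_mul {X 𝕜 ι : Type*} [MeasurableSpace X] {μ : Measure X}
    {p : ENNReal} [RCLike 𝕜] (s : Finset ι) (c : ι → 𝕜) (g : ι → Lp 𝕜 p μ) (m : ι → X → 𝕜)
    (h : X → 𝕜) (hg : ∀ i ∈ s, g i =ᵐ[μ] fun x => m i x * h x) :
    ⇑(∑ i ∈ s, c i • g i) =ᵐ[μ] fun x => (∑ i ∈ s, c i * m i x) * h x := by
  have hterm : ∀ᵐ x ∂μ, ∀ i ∈ s, (c i • g i) x = c i * m i x * h x := by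
    refine (Filter.eventually_all_finset s).2 fun i hi => ?_
    filter_upwards [Lp.coeFn_smul (c i) (g i), hg i hi] with x hsmul hgi
    rw [hsmul, Pi.smul_apply, hgi, smul_eq_mul, mul_assoc]
  filter_upwards [Lp.coeFn_fun_finsetSum s (fun i => c i • g i), hterm] with x hsum hx
  rw [hsum, Finset.sum_mul]
  exact Finset.sum_congr rfl hx

theorem stmt_6_general
    (n : ℕ → ℕ) (α : ℝ) (hα : 1 < α)
    (hlac : ∀ k, α ≤ (n (k + 1) : ℝ) / (n k : ℝ))
    -- `F` is the Plancherel (Fourier) transform on `L²(ℝ)`.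
    (F : Lp ℂ 2 (volume : Measure ℝ) ≃ₗᵢ[ℂ] Lp ℂ 2 (volume : Measure ℝ))
    -- `σ m` is the Fejér mean: the Fourier multiplier with symbol `fejerSymbol m`.
    (σ : ℕ → (Lp ℂ 2 (volume : Measure ℝ) →ₗ[ℂ] Lp ℂ 2 (volume : Measure ℝ)))
    (hσ : ∀ m f, (F (σ m f) : ℝ → ℂ) =ᵐ[volume]
      fun x => (fejerSymbol m x : ℂ) * (F f : ℝ → ℂ) x) :
    ∃ C : ℝ, 0 < C ∧ ∀ c : ℕ → ℂ, (∀ k, ‖c k‖ ≤ 1) →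
      ∀ (N : ℕ) (f : Lp ℂ 2 (volume : Measure ℝ)),
        ‖∑ k ∈ Finset.Icc 1 N, c k • (σ (n (k + 1)) f - σ (n k) f)‖ ≤ C * ‖f‖ := by
  have hn := monotone_of_le_div_succ hα hlac
  refine ⟨1, one_pos, fun c hc N f => ?_⟩
  have hdiff : ∀ k ∈ Finset.Icc 1 N, F (σ (n (k + 1)) f) - F (σ (n k) f) =ᵐ[volume]
      fun x => ((fejerSymbol (n (k + 1)) x : ℂ) - fejerSymbol (n k) x) * F f x := fun k _ => by
    filter_upwards [Lp.coeFn_sub (F (σ (n (k + 1)) f)) (F (σ (n k) f)), hσ (n (k + 1)) f,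
      hσ (n k) f] with x hsub hnext hcur
    rw [hsub, Pi.sub_apply, hnext, hcur, sub_mul]
  have hsymbol := Lp.coeFn_sum_smul_ae_eq_mul _ c _ _ _ hdiff
  rw [← F.norm_map, ← F.norm_map f, map_sum]
  simp only [map_smul, map_sub]
  refine Lp.norm_le_mul_norm_of_ae_le_mul ?_
  filter_upwards [hsymbol] with x hx
  rw [hx, norm_mul]
  gcongr
  exact (norm_sum_mul_sub_le_of_monotone ((fejerSymbol_monotone x).comp hn) hc N).trans
    ((sub_le_self _ (fejerSymbol_nonneg _ x)).trans (fejerSymbol_le_one _ x))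

theorem stmt_6
    (n : ℕ → ℕ) (hn : ∀ k, 0 < n k) (α : ℝ) (hα : 1 < α)
    (hlac : ∀ k, α ≤ (n (k + 1) : ℝ) / (n k : ℝ))
    -- `F` is the Plancherel (Fourier) transform on `L²(ℝ)`.
    (F : Lp ℂ 2 (volume : Measure ℝ) ≃ₗᵢ[ℂ] Lp ℂ 2 (volume : Measure ℝ))
    (hF : ∀ f : Lp ℂ 2 (volume : Measure ℝ), Integrable f volume →
      (F f : ℝ → ℂ) =ᵐ[volume] 𝓕 (f : ℝ → ℂ))
    -- `σ m` is the Fejér mean: the Fourier multiplier with symbol `fejerSymbol m`.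
    (σ : ℕ → (Lp ℂ 2 (volume : Measure ℝ) →ₗ[ℂ] Lp ℂ 2 (volume : Measure ℝ)))
    (hσ : ∀ m f, (F (σ m f) : ℝ → ℂ) =ᵐ[volume]
      fun x => (fejerSymbol m x : ℂ) * (F f : ℝ → ℂ) x) :
    ∃ C : ℝ, 0 < C ∧ ∀ c : ℕ → ℂ, (∀ k, ‖c k‖ ≤ 1) →
      ∀ (N : ℕ) (f : Lp ℂ 2 (volume : Measure ℝ)),
        ‖∑ k ∈ Finset.Icc 1 N, c k • (σ (n (k + 1)) f - σ (n k) f)‖ ≤ C * ‖f‖ :=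
  stmt_6_general n α hα hlac F σ hσ
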